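/- The map f : Q(2,3) → Q(2,3) given by f(x, y) = (−5x, y) is a well-defined injective group homomorphism, its image has index 5 in Q(2,3), and ⋂_{k=1}^∞ im f^k equals the subgroup 0 ⋊ ℤ = {(0, y) : y ∈ ℤ} of Q(2,3). -/

import Mathlib

/-!
`f` is `(x, y) ↦ (x ^ (-5), y)` on `ℤ[1/6] ⋊ ℤ` (written multiplicatively); it is a homomorphism
because multiplication by `-5` commutes with every additive automorphism, in particular with the
action by `3/2`. That action preserves `5 ℤ[1/6]`, so two elements lie in the same left coset of
`im f` exactly when their first coordinates agree modulo `5 ℤ[1/6]`, and the index of `im f` is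
`[ℤ[1/6] : 5 ℤ[1/6]] = 5`: reduction modulo `5` is defined on `ℤ[1/6]` because `6` is invertible
mod `5`, and its kernel is `5 ℤ[1/6]`. Finally `im fᵏ = 5ᵏ ℤ[1/6] ⋊ ℤ`, and if `m / 6ʲ` is divisible
by `5ᵏ` in `ℤ[1/6]` then `5ᵏ ∣ m`, which forces `m = 0` once `5ᵏ > |m|`.
-/

open Multiplicative

/-- `ℤ[1/6]` as an additive subgroup of `ℚ`. -/
def Z16 : AddSubgroup ℚ where
  carrier := {q : ℚ | ∃ (m : ℤ) (k : ℕ), q = m / 6 ^ k}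
  zero_mem' := ⟨0, 0, by norm_num⟩
  add_mem' := by
    rintro a b ⟨m, k, rfl⟩ ⟨m', k', rfl⟩
    refine ⟨m * 6 ^ k' + m' * 6 ^ k, k + k', ?_⟩
    push_cast
    rw [pow_add]
    field_simp
  neg_mem' := by
    rintro a ⟨m, k, rfl⟩
    exact ⟨-m, k, by push_cast; ring⟩

/-- Multiplication by `3/2` as an additive automorphism of `ℤ[1/6]`. -/
def mul32 : Z16 ≃+ Z16 where
  toFun q := ⟨(3 / 2 : ℚ) * q, by
    obtain ⟨m, k, hq⟩ := q.2
    refine ⟨9 * m, k + 1, ?_⟩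
    rw [hq]; push_cast; rw [pow_succ]; field_simp; ring⟩
  invFun q := ⟨(2 / 3 : ℚ) * q, by
    obtain ⟨m, k, hq⟩ := q.2
    refine ⟨4 * m, k + 1, ?_⟩
    rw [hq]; push_cast; rw [pow_succ]; field_simp; ring⟩
  left_inv q := Subtype.ext (by
    show (2 / 3 : ℚ) * ((3 / 2 : ℚ) * (q : ℚ)) = (q : ℚ)
    ring)
  right_inv q := Subtype.ext (by
    show (3 / 2 : ℚ) * ((2 / 3 : ℚ) * (q : ℚ)) = (q : ℚ)
    ring)
  map_add' a b := Subtype.ext (by push_cast; ring)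

/-- The action of `ℤ` on `ℤ[1/6]` in which `1` acts by multiplication by `3/2`. -/
def phiQ : Multiplicative ℤ →* MulAut (Multiplicative Z16) :=
  zpowersHom (MulAut (Multiplicative Z16)) (AddEquiv.toMultiplicative mul32)

/-- The group `Q(2,3) = ℤ[1/6] ⋊ ℤ`, where the generator `1 ∈ ℤ` acts on `ℤ[1/6]` by
multiplication by `3/2`. -/
abbrev Q23 : Type := SemidirectProduct (Multiplicative Z16) (Multiplicative ℤ) phiQ

/-- The element `(1, 0)` of `Q(2,3)`. -/
def Qa : Q23 := SemidirectProduct.inl (ofAdd (⟨1, 1, 0, by norm_num⟩ : Z16))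

/-- The element `(0, 1)` of `Q(2,3)`. -/
def Qt : Q23 := SemidirectProduct.inr (ofAdd (1 : ℤ))

/-- The single relator `t a² t⁻¹ a⁻³` of the Baumslag–Solitar group `BS(2,3)`,
with generator `0` playing the role of `a` and generator `1` the role of `t`. -/
def BSrels : Set (FreeGroup (Fin 2)) :=
  {FreeGroup.of 1 * FreeGroup.of 0 ^ 2 * (FreeGroup.of 1)⁻¹ * (FreeGroup.of 0 ^ 3)⁻¹}

/-- The Baumslag–Solitar group `BS(2,3) = ⟨a, t ∣ t a² t⁻¹ = a³⟩`. -/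
abbrev BS23 : Type := PresentedGroup BSrels

/-- The generator `a` of `BS(2,3)`. -/
def BSa : BS23 := PresentedGroup.of 0

/-- The generator `t` of `BS(2,3)`. -/
def BSt : BS23 := PresentedGroup.of 1

/-- The `k`-th iterate of a group endomorphism. -/
def iterHom {G : Type*} [Group G] (f : G →* G) : ℕ → (G →* G)
  | 0 => MonoidHom.id G
  | k + 1 => (iterHom f k).comp f

namespace SemidirectProduct

variable {N G : Type*} [Group N] [Group G] {φ : G →* MulAut N}

theorem apply_mem_range_iff {f : N →* N}
    (hf : ∀ g, f.comp (φ g).toMonoidHom = (φ g).toMonoidHom.comp f) (g : G) (n : N) :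
    φ g n ∈ f.range ↔ n ∈ f.range := by
  have key : ∀ g n, n ∈ f.range → φ g n ∈ f.range := by
    rintro g _ ⟨m, rfl⟩
    exact ⟨φ g m, DFunLike.congr_fun (hf g) m⟩
  refine ⟨fun h => ?_, key g n⟩
  simpa using key g⁻¹ _ h

theorem mem_range_map_id_iff {f : N →* N}
    (hf : ∀ g, f.comp (φ g).toMonoidHom = (φ g).toMonoidHom.comp f) (p : N ⋊[φ] G) :
    p ∈ (map f (MonoidHom.id G) hf).range ↔ p.left ∈ f.range := by
  constructor
  · rintro ⟨q, rfl⟩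
    exact ⟨q.left, rfl⟩
  · rintro ⟨n, hn⟩
    exact ⟨⟨n, p.right⟩, SemidirectProduct.ext hn rfl⟩

theorem index_range_map_id {f : N →* N}
    (hf : ∀ g, f.comp (φ g).toMonoidHom = (φ g).toMonoidHom.comp f) :
    (map f (MonoidHom.id G) hf).range.index = f.range.index := by
  have rel : ∀ a b : N ⋊[φ] G, a⁻¹ * b ∈ (map f (MonoidHom.id G) hf).range ↔
      a.left⁻¹ * b.left ∈ f.range := fun a b => by
    rw [mem_range_map_id_iff, mul_left, inv_left, inv_right, ← map_mul,
      apply_mem_range_iff hf]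
  let e : (N ⋊[φ] G) ⧸ (map f (MonoidHom.id G) hf).range ≃ N ⧸ f.range :=
    Equiv.ofBijective (Quotient.map' left fun a b h => by
        rw [QuotientGroup.leftRel_apply] at h ⊢; exact (rel a b).1 h)
      ⟨fun x y => Quotient.inductionOn₂' x y fun a b h => Quotient.sound' <| by
          rw [QuotientGroup.leftRel_apply]
          exact (rel a b).2 (QuotientGroup.leftRel_apply.1 (Quotient.exact' h)),
        fun x => Quotient.inductionOn' x fun n => ⟨Quotient.mk'' (inl n), rfl⟩⟩
  exact Nat.card_congr e

theorem mem_range_inr_iff (p : N ⋊[φ] G) : p ∈ (inr : G →* N ⋊[φ] G).range ↔ p.left = 1 :=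
  ⟨by rintro ⟨g, rfl⟩; rfl, fun h => ⟨p.right, SemidirectProduct.ext h.symm rfl⟩⟩

section CommGroup

variable {N G : Type*} [CommGroup N] [Group G] {φ : G →* MulAut N}

def zpowLeft (n : ℤ) : N ⋊[φ] G →* N ⋊[φ] G :=
  map (zpowGroupHom n) (MonoidHom.id G) fun g => MonoidHom.ext fun x => (map_zpow (φ g) x n).symm

theorem zpowLeft_apply (n : ℤ) (p : N ⋊[φ] G) : zpowLeft n p = ⟨p.left ^ n, p.right⟩ := rfl

theorem zpowLeft_injective [IsMulTorsionFree N] {n : ℤ} (hn : n ≠ 0) :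
    Function.Injective (zpowLeft n : N ⋊[φ] G →* N ⋊[φ] G) := fun _ _ h =>
  SemidirectProduct.ext (zpow_left_injective hn (congrArg (·.left) h)) (congrArg (·.right) h)

theorem mem_range_zpowLeft_iff (n : ℤ) (p : N ⋊[φ] G) :
    p ∈ (zpowLeft n).range ↔ p.left ∈ (zpowGroupHom n : N →* N).range :=
  mem_range_map_id_iff _ p

theorem index_range_zpowLeft (n : ℤ) :
    (zpowLeft n : N ⋊[φ] G →* N ⋊[φ] G).range.index = (zpowGroupHom n : N →* N).range.index :=
  index_range_map_id _

theorem iterHom_zpowLeft (n : ℤ) (k : ℕ) :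
    iterHom (zpowLeft n : N ⋊[φ] G →* N ⋊[φ] G) k = zpowLeft (n ^ k) := by
  induction k with
  | zero => exact MonoidHom.ext fun p => by rw [pow_zero, zpowLeft_apply, zpow_one]; rfl
  | succ k ih =>
    refine MonoidHom.ext fun p => ?_
    rw [iterHom, MonoidHom.comp_apply, ih, zpowLeft_apply, zpowLeft_apply, zpowLeft_apply,
      ← zpow_mul, pow_succ']

end CommGroup

end SemidirectProduct

instance : Fact (Nat.Prime 5) := ⟨Nat.prime_five⟩

theorem zmod_five_six_eq_one : (6 : ZMod 5) = 1 := rfl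

namespace Z16

theorem natCast_den_ne_zero (x : Z16) : ((x : ℚ).den : ZMod 5) ≠ 0 := by
  obtain ⟨m, k, hx⟩ := x.2
  obtain ⟨c, hc⟩ : ((x : ℚ).den : ℤ) ∣ 6 ^ k := by
    simpa [hx, Rat.divInt_eq_div] using Rat.den_dvd m (6 ^ k)
  intro h
  have : ((6 ^ k : ℤ) : ZMod 5) = 0 := by rw [hc]; push_cast; rw [h, zero_mul]
  push_cast [zmod_five_six_eq_one, one_pow] at this
  exact one_ne_zero this

noncomputable def mod5 : Z16 →+ ZMod 5 where
  toFun x := Rat.cast (x : ℚ)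
  map_zero' := Rat.cast_zero
  map_add' x y := Rat.cast_add_of_ne_zero (natCast_den_ne_zero x) (natCast_den_ne_zero y)

theorem mod5_apply {x : Z16} {m : ℤ} {k : ℕ} (hx : (x : ℚ) = m / 6 ^ k) : mod5 x = m := by
  have h6 : ((6 ^ k : ℚ).num : ZMod 5) ≠ 0 := by
    rw [show (6 ^ k : ℚ) = ((6 ^ k : ℤ) : ℚ) by push_cast; rfl, Rat.num_intCast]
    push_cast [zmod_five_six_eq_one, one_pow]
    exact one_ne_zero
  show Rat.cast (x : ℚ) = (m : ZMod 5)
  rw [hx, Rat.cast_div_of_ne_zero (by simp) h6]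
  push_cast [zmod_five_six_eq_one]
  rw [one_pow, div_one]

theorem mod5_surjective : Function.Surjective mod5 := fun c =>
  ⟨⟨c.val, c.val, 0, by simp⟩, by rw [mod5_apply (m := c.val) (k := 0) (by simp)]; simp⟩

theorem ker_mod5 : mod5.ker = (zsmulAddGroupHom (-5 : ℤ)).range := by
  ext x
  rw [AddMonoidHom.mem_ker]
  constructor
  · intro hx
    obtain ⟨m, k, hxq⟩ := x.2
    rw [mod5_apply hxq, ZMod.intCast_zmod_eq_zero_iff_dvd] at hx
    obtain ⟨c, rfl⟩ := hx
    refine ⟨⟨-c / 6 ^ k, -c, k, by push_cast; rfl⟩, Subtype.ext ?_⟩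
    rw [zsmulAddGroupHom_apply, AddSubgroup.coe_zsmul, zsmul_eq_mul, hxq]
    push_cast
    ring
  · rintro ⟨y, rfl⟩
    rw [zsmulAddGroupHom_apply, map_zsmul, zsmul_eq_mul]
    exact mul_eq_zero_of_left rfl _

theorem index_range_zsmul_neg_five : (zsmulAddGroupHom (-5 : ℤ) : Z16 →+ Z16).range.index = 5 := by
  rw [← ker_mod5, AddSubgroup.index_ker, AddMonoidHom.range_eq_top.2 mod5_surjective,
    AddSubgroup.card_top, Nat.card_zmod]

theorem eq_zero_of_forall_mem_range_zsmul_pow {x : Z16}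
    (hx : ∀ k : ℕ, x ∈ (zsmulAddGroupHom ((-5 : ℤ) ^ (k + 1))).range) : x = 0 := by
  obtain ⟨m, j, hxq⟩ := x.2
  obtain ⟨⟨y, m', j', hyq⟩, hy⟩ := hx m.natAbs
  have hcross : m * 6 ^ j' = (-5 : ℤ) ^ (m.natAbs + 1) * (m' * 6 ^ j) := by
    have := congrArg Subtype.val hy
    simp only [zsmulAddGroupHom_apply, AddSubgroup.coe_zsmul, zsmul_eq_mul, hxq, hyq] at this
    field_simp at this
    push_cast at this
    exact_mod_cast (by push_cast; linear_combination -this :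
      ((m * 6 ^ j' : ℤ) : ℚ) = (((-5) ^ (m.natAbs + 1) * (m' * 6 ^ j) : ℤ) : ℚ))
  have hcop : IsCoprime ((-5 : ℤ) ^ (m.natAbs + 1)) ((6 : ℤ) ^ j') :=
    IsCoprime.pow (by rw [Int.isCoprime_iff_gcd_eq_one]; rfl)
  have hm : m = 0 := by
    refine Int.eq_zero_of_dvd_of_natAbs_lt_natAbs (hcop.dvd_of_dvd_mul_right ⟨_, hcross⟩) ?_
    rw [Int.natAbs_pow]
    exact (Nat.lt_pow_self (by norm_num)).trans (Nat.pow_lt_pow_right (by norm_num) (by omega))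
  exact Subtype.ext (by simp [hxq, hm])

end Z16

open SemidirectProduct in
/-- **Lemma.** The map `f : Q(2,3) → Q(2,3)`, `f(x, y) = (−5x, y)`, is a well-defined
injective group homomorphism, its image has index `5`, and `⋂_{k≥1} im fᵏ` is the
subgroup `0 ⋊ ℤ = {(0, y) : y ∈ ℤ}`. -/
theorem Q23_endomorphism_properties :
    ∃ f : Q23 →* Q23,
      (∀ (x : Z16) (y : ℤ), f ⟨ofAdd x, ofAdd y⟩ = ⟨ofAdd ((-5 : ℤ) • x), ofAdd y⟩) ∧
      Function.Injective f ∧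
      f.range.index = 5 ∧
      (⨅ k : ℕ, (iterHom f (k + 1)).range) =
        (SemidirectProduct.inr : Multiplicative ℤ →* Q23).range := by
  have zpow_eq (n : ℤ) : (zpowGroupHom n : Multiplicative Z16 →* _) =
      (zsmulAddGroupHom n).toMultiplicative := rfl
  refine ⟨zpowLeft (-5), fun x y => rfl, zpowLeft_injective (by norm_num), ?_, ?_⟩
  · rw [index_range_zpowLeft, zpow_eq, MonoidHom.coe_toMultiplicative_range,
      AddSubgroup.index_toSubgroup, Z16.index_range_zsmul_neg_five]
  · ext p
    simp only [Subgroup.mem_iInf, iterHom_zpowLeft, mem_range_zpowLeft_iff, mem_range_inr_iff]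
    exact ⟨fun h => toAdd.injective (Z16.eq_zero_of_forall_mem_range_zsmul_pow fun k => h k),
      fun h k => h ▸ one_mem _⟩
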